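/- Let d ≥ 1, let Δ ⊆ ℝ^d be a reflexive polytope, and let Δ = Δ_1 + … + Δ_r be a nef partition: each Δ_i is a lattice polytope containing 0, and Δ_i ∩ Δ_j = {0} for i ≠ j. For each i let E_i be the set of extreme points e of Δ* with min_{x ∈ Δ_i} ⟨x, e⟩ = -1, and let ∇_i be the convex hull of E_i ∪ {0}. Then ∇ = ∇_1 + … + ∇_r is a reflexive polytope in ℝ^d and ∇_i ∩ ∇_j = {0} for all i ≠ j; that is, {∇_1, …, ∇_r} is a nef partition of ∇. -/

import Mathlib

open Pointwise

/-- The standard inner product on `ℝ^d`. -/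
def dotp {d : ℕ} (x y : Fin d → ℝ) : ℝ := ∑ i, x i * y i

/-- A point of `ℝ^d` with integer coordinates (a lattice point of `ℤ^d`). -/
def IsLatticePt {d : ℕ} (x : Fin d → ℝ) : Prop := ∀ i, ∃ n : ℤ, x i = (n : ℝ)

/-- A lattice polytope: the convex hull of a finite set of lattice points. -/
def IsLatticePolytope {d : ℕ} (P : Set (Fin d → ℝ)) : Prop :=
  ∃ S : Finset (Fin d → ℝ), (∀ x ∈ S, IsLatticePt x) ∧ P = convexHull ℝ (S : Set (Fin d → ℝ))

/-- The dual set `A* = {x : ⟨y,x⟩ ≥ -1 ∀ y ∈ A}`. -/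
def dualSet {d : ℕ} (A : Set (Fin d → ℝ)) : Set (Fin d → ℝ) :=
  {x | ∀ y ∈ A, -1 ≤ dotp y x}

/-- A reflexive polytope: a lattice polytope with `0` in its interior whose dual is
also a lattice polytope. -/
def IsReflexivePolytope {d : ℕ} (P : Set (Fin d → ℝ)) : Prop :=
  IsLatticePolytope P ∧ (0 : Fin d → ℝ) ∈ interior P ∧ IsLatticePolytope (dualSet P)

/-- The minimum (infimum) of `⟨x, z⟩` over `x ∈ A`. -/
noncomputable def minDot {d : ℕ} (A : Set (Fin d → ℝ)) (z : Fin d → ℝ) : ℝ :=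
  sInf ((fun x => dotp x z) '' A)

/-!
The sum `∇ = ∑ ∇ᵢ` is the dual of `⋃ Δᵢ`, i.e. `∑ ∇ᵢ = ⋂ Δᵢ*`. For `⊆`: a vertex `e ∈ Eⱼ` pairs
to `≥ -1` with `Δⱼ` (as `e ∈ Δ*`) and to `≥ 0` with each `Δₖ`, `k ≠ j` (add to a point of `Δₖ`
a point of `Δⱼ` on which `e` is `-1`). For `⊇`: given `z ∈ ⋂ Δᵢ*`, take lattice minimisers `gᵢ`
of `⟨·, z⟩` on `Δᵢ`. After rescaling, `z` lies on the face of `Δ*` where `⟨∑ gᵢ, ·⟩ = -1`; at each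
vertex `s` of that face integrality forces `⟨gₖ, s⟩ ∈ {-1, 0}` with exactly one `-1`, which puts
`s` into a single `Eₖ`, and the weights `-⟨gₖ, z⟩ ≤ 1` split `z` into points of the `∇ₖ`.

Since the `Δᵢ` are lattice polytopes, `⋂ Δᵢ*` is the dual of a finite lattice set `T`, so `0` is
interior to `∇` and `∇* = conv (T ∪ {0})` is a lattice polytope. A point of `∇ᵢ ∩ ∇ⱼ` pairs
nonnegatively with every `Δₖ`, hence with `Δ`, so it is `0`.
-/

open Set

section ConvexCombinations

variable {E : Type*} [AddCommGroup E] [Module ℝ E]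

theorem mem_convexHull_filter_of_le {V : Finset E} {ℓ : E →ₗ[ℝ] ℝ} {c : ℝ}
    (hV : ∀ s ∈ V, c ≤ ℓ s) {w : E} (hw : w ∈ convexHull ℝ (V : Set E)) (hwc : ℓ w = c) :
    w ∈ convexHull ℝ (V.filter (ℓ · = c) : Set E) := by
  classical
  obtain ⟨t, ht0, ht1, rfl⟩ := Finset.mem_convexHull'.mp hw
  have hslack : ∀ s ∈ V, t s * (ℓ s - c) = 0 := by
    refine (Finset.sum_eq_zero_iff_of_nonneg fun s hs =>
      mul_nonneg (ht0 s hs) (sub_nonneg.mpr (hV s hs))).mp ?_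
    simp only [mul_sub, Finset.sum_sub_distrib, ← Finset.sum_mul, ht1, one_mul, sub_eq_zero]
    simpa [map_sum] using hwc
  have hsupp : ∀ s ∈ V, t s ≠ 0 → ℓ s = c := fun s hs hts =>
    sub_eq_zero.mp ((mul_eq_zero.mp (hslack s hs)).resolve_left hts)
  refine Finset.mem_convexHull'.mpr ⟨t, fun s hs => ht0 s (Finset.mem_filter.mp hs).1, ?_, ?_⟩
  · rw [Finset.sum_filter_of_ne hsupp, ht1]
  · exact Finset.sum_filter_of_ne fun s hs hts => hsupp s hs (left_ne_zero_of_smul hts)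

theorem sum_smul_mem_convexHull_insert_zero {ι : Type*} {A : Set E} {G : Finset ι}
    {a : ι → ℝ} {p : ι → E} (ha : ∀ i ∈ G, 0 ≤ a i) (ha1 : ∑ i ∈ G, a i ≤ 1)
    (hp : ∀ i ∈ G, a i ≠ 0 → p i ∈ A) :
    ∑ i ∈ G, a i • p i ∈ convexHull ℝ (insert 0 A) := by
  classical
  have h0 : (0 : E) ∈ convexHull ℝ (insert 0 A) := subset_convexHull ℝ _ (mem_insert 0 A)
  rcases (Finset.sum_nonneg ha).eq_or_lt with hσ | hσ
  · rwa [Finset.sum_eq_zero fun i hi => by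
      rw [(Finset.sum_eq_zero_iff_of_nonneg ha).mp hσ.symm i hi, zero_smul]]
  have hmass : G.centerMass a p ∈ convexHull ℝ (insert 0 A) := by
    rw [← Finset.centerMass_filter_ne_zero]
    refine Finset.centerMass_mem_convexHull _ (fun i hi => ha i (Finset.mem_filter.mp hi).1)
      (by rwa [Finset.sum_filter_ne_zero]) fun i hi => ?_
    obtain ⟨hiG, hai⟩ := Finset.mem_filter.mp hi
    exact mem_insert_of_mem 0 (hp i hiG hai)
  have := (convex_convexHull ℝ _).smul_mem_of_zero_mem h0 hmass ⟨hσ.le, ha1⟩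
  rwa [Finset.centerMass, smul_smul, mul_inv_cancel₀ hσ.ne', one_smul] at this

theorem sum_smul_mem_sum_convexHull_insert_zero {ι κ : Type*} [Fintype κ] {A : κ → Set E}
    {F : Finset ι} {c : ι → ℝ} {p : ι → E} (φ : κ → ι → ℝ) (hc : ∀ s ∈ F, 0 ≤ c s)
    (hφ : ∀ s ∈ F, ∀ k, 0 ≤ φ k s) (hφ1 : ∀ s ∈ F, ∑ k, φ k s = 1)
    (hA : ∀ s ∈ F, ∀ k, φ k s ≠ 0 → p s ∈ A k) (hle : ∀ k, ∑ s ∈ F, c s * φ k s ≤ 1) :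
    ∑ s ∈ F, c s • p s ∈ ∑ k, convexHull ℝ (insert 0 (A k)) := by
  refine (mem_fintype_sum _ _).mpr ⟨fun k => ∑ s ∈ F, (c s * φ k s) • p s, fun k =>
    sum_smul_mem_convexHull_insert_zero (fun s hs => mul_nonneg (hc s hs) (hφ s hs k)) (hle k)
      fun s hs h => hA s hs k (right_ne_zero_of_mul h), ?_⟩
  rw [Finset.sum_comm]
  refine Finset.sum_congr rfl fun s hs => ?_
  rw [← Finset.sum_smul, ← Finset.mul_sum, hφ1 s hs, mul_one]

end ConvexCombinations

section PointwiseSums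

variable {ι M : Type*} [Fintype ι] [AddCommMonoid M] {A : ι → Set M}

theorem sum_mem_fintype_sum_of_zero_mem (h0 : ∀ i, (0 : M) ∈ A i) {s : Finset ι} {g : ι → M}
    (hg : ∀ i ∈ s, g i ∈ A i) : ∑ i ∈ s, g i ∈ ∑ i, A i := by
  classical
  refine (mem_fintype_sum _ _).mpr ⟨fun i => if i ∈ s then g i else 0, fun i => ?_, ?_⟩
  · dsimp only
    split_ifs with hi
    exacts [hg i hi, h0 i]
  · rw [Finset.sum_ite_mem, Finset.univ_inter]

theorem subset_fintype_sum_of_zero_mem (h0 : ∀ i, (0 : M) ∈ A i) (k : ι) :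
    A k ⊆ ∑ i, A i := by
  intro x hx
  simpa using sum_mem_fintype_sum_of_zero_mem h0 (s := {k}) (g := fun _ => x) (by simpa using hx)

theorem add_mem_fintype_sum_of_zero_mem (h0 : ∀ i, (0 : M) ∈ A i) {j k : ι} (hjk : j ≠ k)
    {x y : M} (hx : x ∈ A j) (hy : y ∈ A k) : x + y ∈ ∑ i, A i := by
  classical
  simpa [Finset.sum_pair hjk, hjk.symm] using sum_mem_fintype_sum_of_zero_mem h0 (s := {j, k})
    (g := fun i => if i = j then x else y) (by simp [hx, hy, hjk.symm])

end PointwiseSums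

section DualSets

variable {d : ℕ}

theorem dotp_eq_dotProduct (x y : Fin d → ℝ) : dotp x y = x ⬝ᵥ y := rfl

theorem dotp_comm (x y : Fin d → ℝ) : dotp x y = dotp y x := dotProduct_comm x y

theorem dotp_fintype_sum_left {ι : Type*} [Fintype ι] (g : ι → Fin d → ℝ) (z : Fin d → ℝ) :
    dotp (∑ i, g i) z = ∑ i, dotp (g i) z :=
  sum_dotProduct _ g z

@[simp]
theorem dotp_zero_left (z : Fin d → ℝ) : dotp 0 z = 0 := zero_dotProduct z

@[simp]
theorem dotp_zero_right (x : Fin d → ℝ) : dotp x 0 = 0 := dotProduct_zero x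

theorem dotp_smul_right (x : Fin d → ℝ) (c : ℝ) (z : Fin d → ℝ) :
    dotp x (c • z) = c * dotp x z :=
  dotProduct_smul c x z

theorem dotp_add_left (x y z : Fin d → ℝ) : dotp (x + y) z = dotp x z + dotp y z :=
  add_dotProduct x y z

noncomputable def dotpCLM (y : Fin d → ℝ) : (Fin d → ℝ) →L[ℝ] ℝ :=
  LinearMap.toContinuousLinearMap (dotProductBilin ℝ ℝ y)

@[simp]
theorem dotpCLM_apply (y x : Fin d → ℝ) : dotpCLM y x = dotp y x := rfl

theorem exists_dotpCLM_eq (f : (Fin d → ℝ) →L[ℝ] ℝ) : ∃ y, dotpCLM y = f := by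
  refine ⟨fun i => f fun j => if i = j then 1 else 0, ContinuousLinearMap.ext fun x => ?_⟩
  rw [dotpCLM_apply, dotp_comm, ← f.coe_coe, f.toLinearMap.pi_apply_eq_sum_univ x]
  simp [dotp, smul_eq_mul]

theorem IsLatticePt.exists_dotp_eq_intCast {x y : Fin d → ℝ} (hx : IsLatticePt x)
    (hy : IsLatticePt y) : ∃ n : ℤ, dotp x y = n := by
  choose m hm using hx
  choose n hn using hy
  exact ⟨∑ i, m i * n i, by simp [dotp, hm, hn]⟩

theorem convex_setOf_le_dotp (z : Fin d → ℝ) (c : ℝ) : Convex ℝ {x | c ≤ dotp x z} := by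
  simp_rw [dotp_comm _ z]
  exact convex_halfSpace_ge (dotpCLM z).toLinearMap.isLinear c

theorem convex_setOf_forall_le_dotp (A : Set (Fin d → ℝ)) (c : ℝ) :
    Convex ℝ {x | ∀ y ∈ A, c ≤ dotp y x} := by
  simp_rw [ofPred_forall]
  exact convex_iInter₂ fun y _ => convex_halfSpace_ge (dotpCLM y).toLinearMap.isLinear c

theorem dualSet_convexHull (A : Set (Fin d → ℝ)) : dualSet (convexHull ℝ A) = dualSet A :=
  Subset.antisymm (fun _ hx y hy => hx y (subset_convexHull ℝ A hy))
    fun x hx _ hy => convexHull_min hx (convex_setOf_le_dotp x (-1)) hy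

theorem dualSet_iUnion {ι : Type*} (A : ι → Set (Fin d → ℝ)) :
    dualSet (⋃ i, A i) = ⋂ i, dualSet (A i) := by
  ext x
  simp only [dualSet, mem_iUnion, mem_iInter, mem_ofPred_eq]
  exact ⟨fun h i y hy => h y ⟨i, hy⟩, fun h y ⟨i, hy⟩ => h i y hy⟩

theorem zero_mem_interior_dualSet (T : Finset (Fin d → ℝ)) :
    (0 : Fin d → ℝ) ∈ interior (dualSet (T : Set (Fin d → ℝ))) := by
  have hT : dualSet (T : Set (Fin d → ℝ)) = ⋂ t ∈ T, dotpCLM t ⁻¹' Ici (-1) := by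
    ext; simp [dualSet]
  rw [mem_interior_iff_mem_nhds, hT, Filter.biInter_finset_mem]
  exact fun t _ => (dotpCLM t).continuous.continuousAt.preimage_mem_nhds (Ici_mem_nhds (by simp))

theorem eq_zero_of_forall_dotp_nonneg {A : Set (Fin d → ℝ)} (hA : (0 : Fin d → ℝ) ∈ interior A)
    {z : Fin d → ℝ} (h : ∀ x ∈ A, 0 ≤ dotp x z) : z = 0 := by
  have hmin : IsLocalMin (dotpCLM z) 0 :=
    Filter.mem_of_superset (mem_interior_iff_mem_nhds.mp hA) fun x hx => by
      simpa [dotp_comm z] using h x hx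
  have hz := congrArg (· z) (hmin.hasFDerivAt_eq_zero (dotpCLM z).hasFDerivAt)
  simpa [dotp_eq_dotProduct] using hz

theorem dualSet_dualSet (T : Finset (Fin d → ℝ)) :
    dualSet (dualSet (T : Set (Fin d → ℝ))) = convexHull ℝ (insert 0 (T : Set (Fin d → ℝ))) := by
  have hT : insert 0 (T : Set (Fin d → ℝ)) ⊆ dualSet (dualSet T) :=
    insert_subset (fun _ _ => by simp) fun t ht y hy => dotp_comm t y ▸ hy t ht
  refine Subset.antisymm (fun x hx => ?_) (convexHull_min hT (convex_setOf_forall_le_dotp _ (-1)))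
  by_contra hxC
  obtain ⟨f, u, hfC, hux⟩ := geometric_hahn_banach_closed_point (convex_convexHull ℝ _)
    ((T.finite_toSet.insert 0).isCompact_convexHull (𝕜 := ℝ)).isClosed hxC
  obtain ⟨g, rfl⟩ := exists_dotpCLM_eq f
  have hu : 0 < u := by simpa using hfC 0 (subset_convexHull ℝ _ (mem_insert 0 _))
  have hzT : (-u⁻¹) • g ∈ dualSet (T : Set (Fin d → ℝ)) := fun t ht => by
    have := hfC t (subset_convexHull ℝ _ (mem_insert_of_mem 0 ht))
    rw [dotpCLM_apply, dotp_comm] at this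
    simp only [dotp_eq_dotProduct, dotProduct_smul, smul_eq_mul] at this ⊢
    rw [neg_mul, neg_le_neg_iff, inv_mul_le_one₀ hu]
    exact this.le
  have := hx _ hzT
  simp only [dotpCLM_apply, dotp_eq_dotProduct, smul_dotProduct, smul_eq_mul] at this hux
  rw [neg_mul, neg_le_neg_iff, inv_mul_le_one₀ hu] at this
  linarith

end DualSets

section LatticePolytopes

variable {d : ℕ}

theorem isLatticePt_zero : IsLatticePt (0 : Fin d → ℝ) := fun _ => ⟨0, by simp⟩

theorem isLatticePolytope_convexHull {A : Set (Fin d → ℝ)} (hA : A.Finite)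
    (hlat : ∀ x ∈ A, IsLatticePt x) : IsLatticePolytope (convexHull ℝ A) :=
  ⟨hA.toFinset, by simpa using hlat, by simp⟩

theorem IsLatticePolytope.add {P Q : Set (Fin d → ℝ)} (hP : IsLatticePolytope P)
    (hQ : IsLatticePolytope Q) : IsLatticePolytope (P + Q) := by
  classical
  obtain ⟨S, hS, rfl⟩ := hP
  obtain ⟨T, hT, rfl⟩ := hQ
  refine ⟨S + T, fun x hx => ?_, by rw [Finset.coe_add, convexHull_add]⟩
  obtain ⟨a, ha, b, hb, rfl⟩ := Finset.mem_add.mp hx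
  intro i
  obtain ⟨m, hm⟩ := hS a ha i
  obtain ⟨n, hn⟩ := hT b hb i
  exact ⟨m + n, by simp [hm, hn]⟩

theorem isLatticePolytope_sum {ι : Type*} (s : Finset ι) {P : ι → Set (Fin d → ℝ)}
    (hP : ∀ i ∈ s, IsLatticePolytope (P i)) : IsLatticePolytope (∑ i ∈ s, P i) :=
  Finset.sum_induction P _ (fun _ _ => IsLatticePolytope.add)
    ⟨{0}, by simpa using isLatticePt_zero, by simp [Set.singleton_zero]⟩
    hP

theorem IsLatticePolytope.finite_extremePoints {P : Set (Fin d → ℝ)}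
    (hP : IsLatticePolytope P) : (extremePoints ℝ P).Finite := by
  obtain ⟨S, -, rfl⟩ := hP
  exact S.finite_toSet.subset extremePoints_convexHull_subset

theorem IsLatticePolytope.isLatticePt_of_mem_extremePoints {P : Set (Fin d → ℝ)}
    (hP : IsLatticePolytope P) {x : Fin d → ℝ} (hx : x ∈ extremePoints ℝ P) : IsLatticePt x := by
  obtain ⟨S, hS, rfl⟩ := hP
  exact hS x (extremePoints_convexHull_subset hx)

theorem IsLatticePolytope.convexHull_extremePoints {P : Set (Fin d → ℝ)}
    (hP : IsLatticePolytope P) : convexHull ℝ (extremePoints ℝ P) = P := by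
  rw [← (hP.finite_extremePoints.isCompact_convexHull (𝕜 := ℝ)).isClosed.closure_eq]
  obtain ⟨S, -, rfl⟩ := hP
  exact closure_convexHull_extremePoints (S.finite_toSet.isCompact_convexHull (𝕜 := ℝ))
    (convex_convexHull ℝ _)

theorem IsLatticePolytope.exists_extremePoints_face {P : Set (Fin d → ℝ)}
    (hP : IsLatticePolytope P) {v w : Fin d → ℝ} {c : ℝ} (hv : ∀ x ∈ P, c ≤ dotp v x)
    (hw : w ∈ P) (hvw : dotp v w = c) :
    ∃ F : Finset (Fin d → ℝ), (∀ s ∈ F, s ∈ extremePoints ℝ P ∧ dotp v s = c) ∧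
      w ∈ convexHull ℝ (F : Set (Fin d → ℝ)) := by
  classical
  refine ⟨hP.finite_extremePoints.toFinset.filter (dotpCLM v · = c), fun s hs => ?_,
    mem_convexHull_filter_of_le (ℓ := (dotpCLM v).toLinearMap) (fun s hs => hv s ?_) ?_ hvw⟩
  · obtain ⟨hsV, hsc⟩ := Finset.mem_filter.mp hs
    exact ⟨(Finite.mem_toFinset _).mp hsV, hsc⟩
  · exact extremePoints_subset ((Finite.mem_toFinset _).mp hs)
  · rwa [Finite.coe_toFinset, hP.convexHull_extremePoints]

theorem IsLatticePolytope.exists_isLatticePt_forall_dotp_le {P : Set (Fin d → ℝ)}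
    (hP : IsLatticePolytope P) (hne : P.Nonempty) (z : Fin d → ℝ) :
    ∃ s ∈ P, IsLatticePt s ∧ ∀ x ∈ P, dotp s z ≤ dotp x z := by
  obtain ⟨S, hS, rfl⟩ := hP
  obtain ⟨s, hs, hmin⟩ := S.exists_min_image (dotp · z) (by simpa using hne)
  exact ⟨s, subset_convexHull ℝ _ hs, hS s hs,
    fun x hx => convexHull_min hmin (convex_setOf_le_dotp z _) hx⟩

theorem minDot_eq_of_forall_dotp_le {A : Set (Fin d → ℝ)} {y z : Fin d → ℝ} (hy : y ∈ A)
    (hmin : ∀ x ∈ A, dotp y z ≤ dotp x z) : minDot A z = dotp y z :=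
  IsLeast.csInf_eq ⟨mem_image_of_mem _ hy, forall_mem_image.mpr hmin⟩

theorem exists_finset_iInter_dualSet_eq {ι : Type*} [Fintype ι]
    {P : ι → Set (Fin d → ℝ)} (hP : ∀ i, IsLatticePolytope (P i)) :
    ∃ T : Finset (Fin d → ℝ), (∀ x ∈ T, IsLatticePt x) ∧ ⋂ i, dualSet (P i) = dualSet ↑T := by
  classical
  choose S hS hPS using hP
  refine ⟨Finset.univ.biUnion S, fun x hx => ?_, ?_⟩
  · obtain ⟨i, -, hx⟩ := Finset.mem_biUnion.mp hx
    exact hS i x hx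
  · simp_rw [hPS, dualSet_convexHull, Finset.coe_biUnion, Finset.coe_univ, biUnion_univ,
      dualSet_iUnion]

end LatticePolytopes

section NefPartitions

variable {d r : ℕ}

def dualNefVertices (D : Fin r → Set (Fin d → ℝ)) (i : Fin r) : Set (Fin d → ℝ) :=
  {e ∈ extremePoints ℝ (dualSet (∑ j, D j)) | minDot (D i) e = -1}

def dualNefPart (D : Fin r → Set (Fin d → ℝ)) (i : Fin r) : Set (Fin d → ℝ) :=
  convexHull ℝ (dualNefVertices D i ∪ {0})

variable {D : Fin r → Set (Fin d → ℝ)}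

theorem zero_mem_dualNefPart (i : Fin r) : (0 : Fin d → ℝ) ∈ dualNefPart D i :=
  subset_convexHull ℝ _ (Or.inr rfl)

theorem isLatticePolytope_dualNefPart (hΔdual : IsLatticePolytope (dualSet (∑ i, D i)))
    (i : Fin r) : IsLatticePolytope (dualNefPart D i) :=
  isLatticePolytope_convexHull
    ((hΔdual.finite_extremePoints.subset (sep_subset _ _)).union (finite_singleton 0))
    fun _ hx => hx.elim (fun he => hΔdual.isLatticePt_of_mem_extremePoints he.1)
      fun h => (mem_singleton_iff.mp h) ▸ isLatticePt_zero

theorem dualSet_sum_subset_dualSet (h0 : ∀ i, (0 : Fin d → ℝ) ∈ D i) (k : Fin r) :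
    dualSet (∑ i, D i) ⊆ dualSet (D k) :=
  fun _ he y hy => he y (subset_fintype_sum_of_zero_mem h0 k hy)

theorem dotp_nonneg_of_mem_dualNefVertices (hlat : ∀ i, IsLatticePolytope (D i))
    (h0 : ∀ i, (0 : Fin d → ℝ) ∈ D i) {j k : Fin r} (hkj : k ≠ j) {e y : Fin d → ℝ}
    (he : e ∈ dualNefVertices D j) (hy : y ∈ D k) : 0 ≤ dotp y e := by
  obtain ⟨s, hs, -, hmin⟩ := (hlat j).exists_isLatticePt_forall_dotp_le ⟨0, h0 j⟩ e
  have hse : dotp s e = -1 := (minDot_eq_of_forall_dotp_le hs hmin).symm.trans he.2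
  have := extremePoints_subset he.1 _ (add_mem_fintype_sum_of_zero_mem h0 hkj.symm hs hy)
  rw [dotp_add_left, hse] at this
  linarith

theorem dualNefPart_subset_dualSet (h0 : ∀ i, (0 : Fin d → ℝ) ∈ D i) (j k : Fin r) :
    dualNefPart D j ⊆ dualSet (D k) :=
  convexHull_min
    (union_subset (fun _ he => dualSet_sum_subset_dualSet h0 k (extremePoints_subset he.1))
      (singleton_subset_iff.mpr fun y _ => by simp))
    (convex_setOf_forall_le_dotp _ _)

theorem dotp_nonneg_of_mem_dualNefPart (hlat : ∀ i, IsLatticePolytope (D i))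
    (h0 : ∀ i, (0 : Fin d → ℝ) ∈ D i) {j k : Fin r} (hkj : k ≠ j) {q y : Fin d → ℝ}
    (hq : q ∈ dualNefPart D j) (hy : y ∈ D k) : 0 ≤ dotp y q := by
  have hsub : dualNefVertices D j ∪ {0} ⊆ {x | ∀ y ∈ D k, 0 ≤ dotp y x} :=
    union_subset (fun _ he _ hy => dotp_nonneg_of_mem_dualNefVertices hlat h0 hkj he hy)
      (by simp)
  exact convexHull_min hsub (convex_setOf_forall_le_dotp (D k) 0) hq y hy

theorem sum_dualNefPart_subset (hlat : ∀ i, IsLatticePolytope (D i))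
    (h0 : ∀ i, (0 : Fin d → ℝ) ∈ D i) : ∑ i, dualNefPart D i ⊆ ⋂ k, dualSet (D k) := by
  intro z hz
  obtain ⟨q, hq, rfl⟩ := (mem_fintype_sum _ _).mp hz
  refine mem_iInter.mpr fun k y hy => ?_
  rw [dotp_comm, dotp_fintype_sum_left, ← Finset.add_sum_erase _ _ (Finset.mem_univ k)]
  have hk : -1 ≤ dotp (q k) y := dotp_comm y (q k) ▸ dualNefPart_subset_dualSet h0 k k (hq k) y hy
  have hrest : 0 ≤ ∑ i ∈ Finset.univ.erase k, dotp (q i) y := Finset.sum_nonneg fun i hi =>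
    dotp_comm y (q i) ▸
      dotp_nonneg_of_mem_dualNefPart hlat h0 (Finset.ne_of_mem_erase hi).symm (hq i) hy
  linarith

theorem dotp_eq_neg_one_or_zero (h0 : ∀ i, (0 : Fin d → ℝ) ∈ D i) {e : Fin d → ℝ}
    (he : e ∈ dualSet (∑ i, D i)) (helat : IsLatticePt e) {g : Fin r → Fin d → ℝ}
    (hg : ∀ i, g i ∈ D i) (hglat : ∀ i, IsLatticePt (g i)) (hge : dotp (∑ i, g i) e = -1)
    (j : Fin r) : dotp (g j) e = -1 ∨ dotp (g j) e = 0 := by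
  obtain ⟨n, hn⟩ := (hglat j).exists_dotp_eq_intCast helat
  have hlow : -1 ≤ dotp (g j) e := dualSet_sum_subset_dualSet h0 j he _ (hg j)
  have hup : dotp (g j) e ≤ 0 := by
    have hrest :=
      he _ (sum_mem_fintype_sum_of_zero_mem h0 (s := Finset.univ.erase j) fun i _ => hg i)
    rw [← Finset.add_sum_erase _ _ (Finset.mem_univ j), dotp_add_left] at hge
    linarith
  rw [hn] at hlow hup ⊢
  norm_cast at hlow hup ⊢
  omega

theorem smul_mem_sum_dualNefPart (h0 : ∀ i, (0 : Fin d → ℝ) ∈ D i)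
    (hΔdual : IsLatticePolytope (dualSet (∑ i, D i))) {g : Fin r → Fin d → ℝ}
    (hg : ∀ i, g i ∈ D i) (hglat : ∀ i, IsLatticePt (g i)) {w : Fin d → ℝ}
    (hw : w ∈ dualSet (∑ i, D i)) (hgw : dotp (∑ i, g i) w = -1) {μ : ℝ} (hμ : 0 ≤ μ)
    (hμw : ∀ k, -(μ * dotp (g k) w) ≤ 1) : μ • w ∈ ∑ i, dualNefPart D i := by
  have hv : ∀ x ∈ dualSet (∑ i, D i), -1 ≤ dotp (∑ i, g i) x := fun x hx =>
    hx _ (sum_mem_fintype_sum_of_zero_mem h0 fun i _ => hg i)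
  obtain ⟨F, hF, hwF⟩ := hΔdual.exists_extremePoints_face hv hw hgw
  obtain ⟨t, ht0, ht1, rfl⟩ := Finset.mem_convexHull'.mp hwF
  have hdich : ∀ s ∈ F, ∀ k, dotp (g k) s = -1 ∨ dotp (g k) s = 0 := fun s hs =>
    dotp_eq_neg_one_or_zero h0 (extremePoints_subset (hF s hs).1)
      (hΔdual.isLatticePt_of_mem_extremePoints (hF s hs).1) hg hglat (hF s hs).2
  simp_rw [Finset.smul_sum, smul_smul, dualNefPart, union_singleton]
  -- `-⟨gₖ, s⟩ ∈ {0, 1}` sums to `1` over `k` on the face, assigning each vertex `s` to one `Eₖ`.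
  refine sum_smul_mem_sum_convexHull_insert_zero (fun k s => -dotp (g k) s)
    (fun s hs => mul_nonneg hμ (ht0 s hs)) (fun s hs k => ?_) (fun s hs => ?_)
    (fun s hs k hk => ?_) (fun k => ?_)
  · rcases hdich s hs k with h | h <;> simp [h]
  · rw [Finset.sum_neg_distrib, ← dotp_fintype_sum_left, (hF s hs).2, neg_neg]
  · have hsk : dotp (g k) s = -1 := (hdich s hs k).resolve_right (by simpa using hk)
    refine ⟨(hF s hs).1, (minDot_eq_of_forall_dotp_le (hg k) fun x hx => ?_).trans hsk⟩
    exact hsk ▸ dualSet_sum_subset_dualSet h0 k (extremePoints_subset (hF s hs).1) x hx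
  · convert hμw k using 1
    simp only [dotp_eq_dotProduct, dotProduct_sum, dotProduct_smul, smul_eq_mul, Finset.mul_sum]
    rw [← Finset.sum_neg_distrib]
    exact Finset.sum_congr rfl fun s _ => by ring

theorem mem_sum_dualNefPart_of_mem_dualSet (hlat : ∀ i, IsLatticePolytope (D i))
    (h0 : ∀ i, (0 : Fin d → ℝ) ∈ D i) (hΔ0 : (0 : Fin d → ℝ) ∈ interior (∑ i, D i))
    (hΔdual : IsLatticePolytope (dualSet (∑ i, D i))) {z : Fin d → ℝ}
    (hz : ∀ k, z ∈ dualSet (D k)) : z ∈ ∑ i, dualNefPart D i := by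
  choose g hg hglat hgmin using fun i => (hlat i).exists_isLatticePt_forall_dotp_le ⟨0, h0 i⟩ z
  have hmin : ∀ y ∈ ∑ i, D i, dotp (∑ i, g i) z ≤ dotp y z := by
    intro y hy
    obtain ⟨y', hy', rfl⟩ := (mem_fintype_sum _ _).mp hy
    rw [dotp_fintype_sum_left, dotp_fintype_sum_left]
    exact Finset.sum_le_sum fun i _ => hgmin i _ (hy' i)
  rcases le_or_gt 0 (dotp (∑ i, g i) z) with hm | hm
  · rw [eq_zero_of_forall_dotp_nonneg hΔ0 fun y hy => hm.trans (hmin y hy)]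
    exact (mem_fintype_sum _ _).mpr ⟨0, zero_mem_dualNefPart, by simp⟩
  set μ := -dotp (∑ i, g i) z
  have hμ : 0 < μ := neg_pos.mpr hm
  have key := smul_mem_sum_dualNefPart h0 hΔdual hg hglat (w := μ⁻¹ • z) (fun y hy => ?_) ?_ hμ.le
    fun k => ?_
  · rwa [smul_smul, mul_inv_cancel₀ hμ.ne', one_smul] at key
  · rw [dotp_smul_right, le_inv_mul_iff₀ hμ]
    linarith [hmin y hy]
  · rw [dotp_smul_right, inv_mul_eq_iff_eq_mul₀ hμ.ne']
    ring
  · rw [dotp_smul_right, ← mul_assoc, mul_inv_cancel₀ hμ.ne', one_mul, neg_le]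
    exact hz k _ (hg k)

theorem sum_dualNefPart_eq (hlat : ∀ i, IsLatticePolytope (D i))
    (h0 : ∀ i, (0 : Fin d → ℝ) ∈ D i) (hΔ0 : (0 : Fin d → ℝ) ∈ interior (∑ i, D i))
    (hΔdual : IsLatticePolytope (dualSet (∑ i, D i))) :
    ∑ i, dualNefPart D i = ⋂ k, dualSet (D k) :=
  Subset.antisymm (sum_dualNefPart_subset hlat h0) fun _ hz =>
    mem_sum_dualNefPart_of_mem_dualSet hlat h0 hΔ0 hΔdual (mem_iInter.mp hz)

theorem dualNefPart_inter_dualNefPart (hlat : ∀ i, IsLatticePolytope (D i))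
    (h0 : ∀ i, (0 : Fin d → ℝ) ∈ D i) (hΔ0 : (0 : Fin d → ℝ) ∈ interior (∑ i, D i))
    {i j : Fin r} (hij : i ≠ j) : dualNefPart D i ∩ dualNefPart D j = {0} := by
  refine Subset.antisymm (fun x ⟨hxi, hxj⟩ => eq_zero_of_forall_dotp_nonneg hΔ0 fun y hy => ?_)
    (singleton_subset_iff.mpr ⟨zero_mem_dualNefPart i, zero_mem_dualNefPart j⟩)
  obtain ⟨g, hg, rfl⟩ := (mem_fintype_sum _ _).mp hy
  rw [dotp_fintype_sum_left]
  refine Finset.sum_nonneg fun k _ => ?_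
  rcases eq_or_ne k i with rfl | hki
  · exact dotp_nonneg_of_mem_dualNefPart hlat h0 hij hxj (hg k)
  · exact dotp_nonneg_of_mem_dualNefPart hlat h0 hki hxi (hg k)

end NefPartitions

theorem dual_nef_partition_is_nef_general {d r : ℕ}
    (Δ : Set (Fin d → ℝ)) (hΔ : IsReflexivePolytope Δ)
    (D : Fin r → Set (Fin d → ℝ)) (hlat : ∀ i, IsLatticePolytope (D i))
    (h0 : ∀ i, (0 : Fin d → ℝ) ∈ D i) (hsum : Δ = ∑ i, D i)
    (E : Fin r → Set (Fin d → ℝ))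
    (hE : ∀ i, E i = {e ∈ Set.extremePoints ℝ (dualSet Δ) | minDot (D i) e = -1})
    (N : Fin r → Set (Fin d → ℝ))
    (hN : ∀ i, N i = convexHull ℝ (E i ∪ {0})) :
    IsReflexivePolytope (∑ i, N i) ∧ ∀ i j, i ≠ j → N i ∩ N j = {0} := by
  subst hsum
  obtain rfl : E = dualNefVertices D := funext hE
  obtain rfl : N = dualNefPart D := funext hN
  obtain ⟨-, hΔ0, hΔdual⟩ := hΔ
  obtain ⟨T, hTlat, hT⟩ := exists_finset_iInter_dualSet_eq hlat
  have hNT : ∑ i, dualNefPart D i = dualSet ↑T := (sum_dualNefPart_eq hlat h0 hΔ0 hΔdual).trans hT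
  refine ⟨⟨isLatticePolytope_sum _ fun i _ => isLatticePolytope_dualNefPart hΔdual i,
    hNT ▸ zero_mem_interior_dualSet T, ?_⟩,
    fun i j hij => dualNefPart_inter_dualNefPart hlat h0 hΔ0 hij⟩
  rw [hNT, dualSet_dualSet]
  exact isLatticePolytope_convexHull (T.finite_toSet.insert 0)
    (forall_mem_insert.mpr ⟨isLatticePt_zero, hTlat⟩)

/-- the dual of a nef partition is a nef partition of a reflexive
polytope `∇ = ∇_1 + ⋯ + ∇_r` (Remark 3.3, Borisov). -/
theorem dual_nef_partition_is_nef {d r : ℕ} (hd : 1 ≤ d)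
    (Δ : Set (Fin d → ℝ)) (hΔ : IsReflexivePolytope Δ)
    (D : Fin r → Set (Fin d → ℝ)) (hlat : ∀ i, IsLatticePolytope (D i))
    (h0 : ∀ i, (0 : Fin d → ℝ) ∈ D i) (hsum : Δ = ∑ i, D i)
    (hnef : ∀ i j, i ≠ j → D i ∩ D j = {0})
    (E : Fin r → Set (Fin d → ℝ))
    (hE : ∀ i, E i = {e ∈ Set.extremePoints ℝ (dualSet Δ) | minDot (D i) e = -1})
    (N : Fin r → Set (Fin d → ℝ))
    (hN : ∀ i, N i = convexHull ℝ (E i ∪ {0})) :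
    IsReflexivePolytope (∑ i, N i) ∧ ∀ i j, i ≠ j → N i ∩ N j = {0} :=
  dual_nef_partition_is_nef_general Δ hΔ D hlat h0 hsum E hE N hN
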